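/- Let 0 ≤ r < m with m + r even and let f be an r-plateaued Boolean function in m variables. Write W_f(x) = (−1)^{g(x)}·2^{(m+r)/2} for x ∈ S_f (defining g : S_f → 𝔽₂) and for b ∈ 𝔽₂^m set f_b(x) = b·x + f(b) + g(x) for x ∈ S_f, with blocks B^{f_b} = {p ∈ S_f : f_b(p) = 1}. Then the blocks of the addition design are pairwise distinct (i.e., B^{f_a} ≠ B^{f_b} whenever a ≠ b) if and only if f has no nonzero linear structure. -/

import Mathlib

open Finset

/-- dot product on 𝔽₂^m -/
def dotp {m : ℕ} (a x : Fin m → ZMod 2) : ZMod 2 := ∑ i, a i * x i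

/-- (−1)^a for a ∈ 𝔽₂, as an integer -/
def sgn (a : ZMod 2) : ℤ := if a = 0 then 1 else -1

/-- Walsh transform of f on a finite subset P of 𝔽₂^m -/
def walsh {m : ℕ} (P : Finset (Fin m → ZMod 2)) (f : (Fin m → ZMod 2) → ZMod 2)
    (u : Fin m → ZMod 2) : ℤ :=
  ∑ x ∈ P, sgn (f x + dotp u x)

/-- Walsh transform of f on all of 𝔽₂^m -/
def walshF {m : ℕ} (f : (Fin m → ZMod 2) → ZMod 2) (u : Fin m → ZMod 2) : ℤ :=
  walsh Finset.univ f u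


/-- The Walsh support S_f of a Boolean function, as a finset. -/
def walshSupp {m : ℕ} (f : (Fin m → ZMod 2) → ZMod 2) : Finset (Fin m → ZMod 2) :=
  Finset.univ.filter (fun a => walshF f a ≠ 0)

/-- The block B^{f_b} ⊆ S_f of the addition design, where f_b(x) = b·x + f(b) + g(x). -/
def addBlock {m : ℕ} (f g : (Fin m → ZMod 2) → ZMod 2) (b : Fin m → ZMod 2) :
    Finset (Fin m → ZMod 2) :=
  (walshSupp f).filter (fun p => dotp b p + f b + g p = 1)

/- ---------- auxiliary lemmas ---------- -/

lemma sgn_add' : ∀ a b : ZMod 2, sgn (a + b) = sgn a * sgn b := by decide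

lemma sgn_inj : ∀ a b : ZMod 2, sgn a = sgn b → a = b := by decide

lemma z2_add_eq_zero : ∀ a b : ZMod 2, a + b = 0 ↔ a = b := by decide

lemma z2_helper1 : ∀ a c : ZMod 2, a + (c + a) = c := by decide

lemma z2_helper2 : ∀ a c : ZMod 2, a + (a + c) = c := by decide

lemma dotp_add_right {m : ℕ} (a x y : Fin m → ZMod 2) :
    dotp a (x + y) = dotp a x + dotp a y := by
  simp [dotp, mul_add, Finset.sum_add_distrib]

lemma dotp_add_left {m : ℕ} (a b x : Fin m → ZMod 2) :
    dotp (a + b) x = dotp a x + dotp b x := by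
  simp [dotp, add_mul, Finset.sum_add_distrib]

lemma dotp_comm {m : ℕ} (a x : Fin m → ZMod 2) : dotp a x = dotp x a := by
  simp [dotp, mul_comm]

lemma dotp_zero_right {m : ℕ} (a : Fin m → ZMod 2) : dotp a 0 = 0 := by
  simp [dotp]

lemma dotp_zero_left {m : ℕ} (a : Fin m → ZMod 2) : dotp 0 a = 0 := by
  simp [dotp]

lemma vec_add_self {m : ℕ} (x : Fin m → ZMod 2) : x + x = 0 := by
  funext i
  simp only [Pi.add_apply, Pi.zero_apply]
  revert x
  intro x
  exact (z2_add_eq_zero (x i) (x i)).2 rfl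

lemma vec_add_eq_zero {m : ℕ} (x y : Fin m → ZMod 2) : x + y = 0 ↔ x = y := by
  constructor
  · intro h
    funext i
    have := congrFun h i
    exact (z2_add_eq_zero (x i) (y i)).1 this
  · rintro rfl; exact vec_add_self x

lemma dotp_update {m : ℕ} (u z : Fin m → ZMod 2) (i : Fin m) (t : ZMod 2) :
    dotp (Function.update u i t) z = dotp u z + (t - u i) * z i := by
  have h : dotp (Function.update u i t) z - dotp u z
      = ∑ j, (Function.update u i t j - u j) * z j := by
    rw [dotp, dotp, ← Finset.sum_sub_distrib]
    exact Finset.sum_congr rfl fun j _ => by ring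
  have h2 : ∑ j, (Function.update u i t j - u j) * z j = (t - u i) * z i := by
    rw [Finset.sum_eq_single_of_mem i (Finset.mem_univ i)
      (fun j _ hj => by simp [Function.update_of_ne hj])]
    simp
  have h3 := h.trans h2
  rw [sub_eq_iff_eq_add'] at h3
  rw [h3]

lemma z2_ne_zero : ∀ t : ZMod 2, t ≠ 0 → t = 1 := by decide

lemma z2_two_add (t : ZMod 2) : t + 1 + 1 = t := by revert t; decide

lemma sum_sgn_dotp_ne {m : ℕ} (z : Fin m → ZMod 2) (hz : z ≠ 0) :
    ∑ u : Fin m → ZMod 2, sgn (dotp u z) = 0 := by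
  obtain ⟨i, hi⟩ : ∃ i, z i ≠ 0 := by
    by_contra hc
    push_neg at hc
    exact hz (funext hc)
  have hzi : z i = 1 := z2_ne_zero _ hi
  set σ : (Fin m → ZMod 2) → (Fin m → ZMod 2) :=
    fun u => Function.update u i (u i + 1) with hσ
  have hinv : Function.Involutive σ := by
    intro u
    funext j
    by_cases hji : j = i
    · subst hji
      simp only [hσ, Function.update_self]
      exact z2_two_add (u j)
    · simp only [hσ, Function.update_of_ne hji]
  have hbij : Function.Bijective σ := hinv.bijective
  have hflip : ∀ u, sgn (dotp (σ u) z) = - sgn (dotp u z) := by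
    intro u
    have : dotp (σ u) z = dotp u z + 1 := by
      rw [hσ]
      simp only
      rw [dotp_update]
      simp [hzi]
    rw [this, sgn_add']
    have : sgn (1 : ZMod 2) = -1 := by decide
    rw [this]; ring
  have hkey : ∑ u : Fin m → ZMod 2, sgn (dotp (σ u) z)
      = ∑ u : Fin m → ZMod 2, sgn (dotp u z) :=
    Fintype.sum_bijective σ hbij _ _ (fun u => rfl)
  have : ∑ u : Fin m → ZMod 2, sgn (dotp u z)
      = - ∑ u : Fin m → ZMod 2, sgn (dotp u z) := by
    conv_lhs => rw [← hkey]
    rw [← Finset.sum_neg_distrib]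
    exact Finset.sum_congr rfl fun u _ => hflip u
  linarith

lemma sum_sgn_dotp {m : ℕ} (z : Fin m → ZMod 2) :
    ∑ u : Fin m → ZMod 2, sgn (dotp u z) = if z = 0 then (2 : ℤ) ^ m else 0 := by
  by_cases hz : z = 0
  · subst hz
    have h1 : ∀ u : Fin m → ZMod 2, sgn (dotp u 0) = 1 := by
      intro u; rw [dotp_zero_right]; decide
    rw [if_pos rfl, Finset.sum_congr rfl fun u _ => h1 u, Finset.sum_const,
      Finset.card_univ]
    simp [Fintype.card_fun]
  · simp [hz, sum_sgn_dotp_ne z hz]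

lemma inversion {m : ℕ} (f : (Fin m → ZMod 2) → ZMod 2) (x : Fin m → ZMod 2) :
    ∑ u : Fin m → ZMod 2, walshF f u * sgn (dotp u x) = 2 ^ m * sgn (f x) := by
  have step : ∀ u : Fin m → ZMod 2, walshF f u * sgn (dotp u x)
      = ∑ y : Fin m → ZMod 2, sgn (f y) * sgn (dotp u (y + x)) := by
    intro u
    rw [walshF, walsh, Finset.sum_mul]
    refine Finset.sum_congr rfl fun y _ => ?_
    rw [dotp_add_right, sgn_add', sgn_add']
    ring
  rw [Finset.sum_congr rfl fun u _ => step u, Finset.sum_comm]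
  have step2 : ∀ y : Fin m → ZMod 2,
      ∑ u : Fin m → ZMod 2, sgn (f y) * sgn (dotp u (y + x))
      = sgn (f y) * (if y + x = 0 then (2:ℤ)^m else 0) := by
    intro y
    rw [← Finset.mul_sum, sum_sgn_dotp]
  rw [Finset.sum_congr rfl fun y _ => step2 y]
  rw [Finset.sum_eq_single x]
  · simp [vec_add_self x]; ring
  · intro y _ hyx
    have : ¬ (y + x = 0) := fun h => hyx ((vec_add_eq_zero y x).1 h)
    simp [this]
  · intro hx; exact absurd (Finset.mem_univ x) hx

lemma ls_dotp {m : ℕ} (f : (Fin m → ZMod 2) → ZMod 2) (a : Fin m → ZMod 2) (c : ZMod 2)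
    (h : ∀ x, f x + f (x + a) = c) :
    ∀ u : Fin m → ZMod 2, walshF f u ≠ 0 → dotp u a = c := by
  intro u hu
  have hre : walshF f u = ∑ x : Fin m → ZMod 2, sgn (f (x + a) + dotp u (x + a)) := by
    rw [walshF, walsh]
    have hinv : Function.Involutive (fun x : Fin m → ZMod 2 => x + a) := by
      intro x
      simp only
      rw [add_assoc, vec_add_self, add_zero]
    exact Fintype.sum_bijective (fun x => x + a) hinv.bijective _ _
      (fun x => by rw [add_assoc, vec_add_self, add_zero])
  have hfa : ∀ x, f (x + a) = f x + c := by
    intro x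
    have := h x
    have h2 : f x + (f x + f (x + a)) = f x + c := by rw [this]
    rwa [← add_assoc, (z2_add_eq_zero (f x) (f x)).2 rfl, zero_add] at h2
  have hre2 : walshF f u = sgn (dotp u a + c) * walshF f u := by
    conv_lhs => rw [hre]
    rw [walshF, walsh, Finset.mul_sum]
    refine Finset.sum_congr rfl fun x _ => ?_
    rw [hfa x, dotp_add_right, ← sgn_add']
    congr 1
    ring
  by_contra hne
  have hne0 : dotp u a + c ≠ 0 := by
    intro h0
    exact hne ((z2_add_eq_zero _ _).1 h0)
  have : sgn (dotp u a + c) = -1 := by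
    simp [sgn, hne0]
  rw [this] at hre2
  omega

lemma supp_ls {m : ℕ} (f : (Fin m → ZMod 2) → ZMod 2) (a : Fin m → ZMod 2) (c : ZMod 2)
    (h : ∀ u : Fin m → ZMod 2, walshF f u ≠ 0 → dotp u a = c) :
    ∀ x, f x + f (x + a) = c := by
  intro x
  have h1 := inversion f x
  have h2 := inversion f (x + a)
  have key : ∀ u : Fin m → ZMod 2, walshF f u * sgn (dotp u (x + a))
      = sgn c * (walshF f u * sgn (dotp u x)) := by
    intro u
    by_cases hu : walshF f u = 0
    · simp [hu]
    · rw [dotp_add_right, h u hu, sgn_add']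
      ring
  have hsum : (2:ℤ) ^ m * sgn (f (x + a)) = sgn c * ((2:ℤ) ^ m * sgn (f x)) := by
    rw [← h1, ← h2, Finset.mul_sum]
    exact Finset.sum_congr rfl fun u _ => key u
  have hm : ((2:ℤ)^m) ≠ 0 := by positivity
  have hsg : sgn (f (x + a)) = sgn (f x + c) := by
    rw [sgn_add']
    apply mul_left_cancel₀ hm
    rw [hsum]; ring
  have heq := sgn_inj _ _ hsg
  rw [heq]
  exact z2_helper2 (f x) c


lemma mem_walshSupp {m : ℕ} (f : (Fin m → ZMod 2) → ZMod 2) (p : Fin m → ZMod 2) :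
    p ∈ walshSupp f ↔ walshF f p ≠ 0 := by
  simp [walshSupp]

lemma z2_block_helper : ∀ X Y G : ZMod 2, ((X + G = 1) ↔ (Y + G = 1)) → X = Y := by decide

lemma block_eq_iff {m : ℕ} (f g : (Fin m → ZMod 2) → ZMod 2) (a b : Fin m → ZMod 2) :
    addBlock f g a = addBlock f g b ↔
    ∀ p ∈ walshSupp f, dotp a p + f a = dotp b p + f b := by
  constructor
  · intro h p hp
    have hm := Finset.ext_iff.mp h p
    simp only [addBlock, Finset.mem_filter, hp, true_and] at hm
    exact z2_block_helper _ _ (g p) hm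
  · intro h
    unfold addBlock
    apply Finset.filter_congr
    intro p hp
    rw [h p hp]

theorem stmt_10 (m r : ℕ) (hrm : r < m) (hpar : Even (m + r))
    (f : (Fin m → ZMod 2) → ZMod 2)
    (hplat : ∀ a, walshF f a = 0 ∨ walshF f a = 2 ^ ((m + r) / 2) ∨
      walshF f a = -2 ^ ((m + r) / 2))
    (g : (Fin m → ZMod 2) → ZMod 2)
    (hg : ∀ x ∈ walshSupp f, walshF f x = sgn (g x) * 2 ^ ((m + r) / 2)) :
    (∀ a b : Fin m → ZMod 2, a ≠ b → addBlock f g a ≠ addBlock f g b) ↔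
    (∀ a : Fin m → ZMod 2, a ≠ 0 → ¬ ∃ c : ZMod 2, ∀ x, f x + f (x + a) = c) := by
  constructor
  · intro hdist a ha ⟨c, hc⟩
    have hsupp : ∀ u : Fin m → ZMod 2, walshF f u ≠ 0 → dotp u a = c :=
      ls_dotp f a c hc
    have hc0 : f 0 + f a = c := by
      have := hc 0
      rwa [zero_add] at this
    have hblocks : addBlock f g 0 = addBlock f g a := by
      rw [block_eq_iff]
      intro p hp
      rw [dotp_zero_left, zero_add, dotp_comm a p,
        hsupp p ((mem_walshSupp f p).1 hp)]
      -- goal: f 0 = c + f a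
      have : c + f a = f 0 + (f a + f a) := by rw [← hc0]; ring
      rw [this, (z2_add_eq_zero (f a) (f a)).2 rfl, add_zero]
    exact hdist 0 a (Ne.symm ha) hblocks
  · intro hns a b hab hblocks
    have hcond := (block_eq_iff f g a b).1 hblocks
    set c : ZMod 2 := f a + f b with hc
    have hdc : ∀ u : Fin m → ZMod 2, walshF f u ≠ 0 → dotp u (a + b) = c := by
      intro u hu
      have hp := hcond u ((mem_walshSupp f u).2 hu)
      rw [dotp_comm u (a+b), dotp_add_left]
      have hkey : dotp a u + dotp b u + (f a + f b) = 0 := by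
        have h2 : (dotp a u + f a) + (dotp b u + f b)
            = (dotp b u + f b) + (dotp b u + f b) := by rw [hp]
        rw [(z2_add_eq_zero _ _).2 rfl] at h2
        calc dotp a u + dotp b u + (f a + f b)
            = (dotp a u + f a) + (dotp b u + f b) := by ring
          _ = 0 := h2
      exact (z2_add_eq_zero _ _).1 hkey
    have hls := supp_ls f (a + b) c hdc
    have hne : a + b ≠ 0 := fun h0 => hab ((vec_add_eq_zero a b).1 h0)
    exact hns (a + b) hne ⟨c, hls⟩
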